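/- arXiv:1509.02945 — 6 statements merged into one kernel-verified Lean document; each statement's English description precedes it below -/
import Mathlib

section
/- For every natural number n, the Koornwinder polynomial K_n admits the expansion K_n(s) = −Σ_{j=0}^{n−1} (2j+1)·L_j(s) + (n²+1)·L_n(s), as an identity of real polynomials. -/
/-!
Differentiating Rodrigues' formula `L_n = (2^n n!)⁻¹ Dⁿ (X² - 1)ⁿ` with the Leibniz rule for
`D^{n+1} (p * X)` gives the two classical recurrences
`L'_{n+1} = X L'_n + (n+1) L_n` and `X L'_{n+1} = (n+1) L_{n+1} + L'_n`.
Their sum says `(1+X) L'_{n+1} - (1+X) L'_n = (n+1) L_n + (n+1) L_{n+1}`, which telescopes to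
`(1+X) L'_n = ∑_{j<n} (2j+1) L_j + n L_n`; substituting this into `K_n` gives the expansion.
-/

open Polynomial

/-- The `n`-th Legendre polynomial (over `ℝ`), normalized so that `legendre n` evaluates
to `1` at `1`, defined via Rodrigues' formula. -/
noncomputable def legendre (n : ℕ) : Polynomial ℝ :=
  ((1 : ℝ) / (2 ^ n * n.factorial)) • derivative^[n] ((X ^ 2 - 1) ^ n)

/-- The `n`-th Koornwinder polynomial `K_n(s) = -(1+s) L_n'(s) + (n² + n + 1) L_n(s)`. -/
noncomputable def koornwinder (n : ℕ) : Polynomial ℝ :=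
  -(1 + X) * derivative (legendre n) + ((n : ℝ) ^ 2 + (n : ℝ) + 1) • legendre n

namespace Polynomial

variable (R : Type*) [CommRing R]

noncomputable def rodrigues (n : ℕ) : R[X] :=
  derivative^[n] ((X ^ 2 - 1) ^ n)

variable {R}

theorem derivative_X_sq_sub_one_pow_succ (n : ℕ) :
    derivative ((X ^ 2 - 1 : R[X]) ^ (n + 1)) = (2 * (n + 1)) • (X * (X ^ 2 - 1 : R[X]) ^ n) := by
  rw [derivative_pow]
  simp only [derivative_sub, derivative_X_pow, derivative_one, Nat.add_sub_cancel, nsmul_eq_mul,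
    C_eq_natCast]
  push_cast
  ring

theorem derivative_rodrigues (n : ℕ) :
    derivative (rodrigues R n) = derivative^[n + 1] ((X ^ 2 - 1) ^ n) :=
  (Function.iterate_succ_apply' _ _ _).symm

theorem derivative_rodrigues_succ (n : ℕ) :
    derivative (rodrigues R (n + 1)) =
      (2 * (n + 1)) • (X * derivative (rodrigues R n) + (n + 1) • rodrigues R n) := by
  rw [derivative_rodrigues, Function.iterate_succ_apply, derivative_X_sq_sub_one_pow_succ,
    iterate_derivative_smul, mul_comm X, iterate_derivative_mul_X, derivative_rodrigues,
    Nat.add_sub_cancel, rodrigues, mul_comm X]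

theorem X_mul_derivative_rodrigues_succ (n : ℕ) :
    X * derivative (rodrigues R (n + 1))
      = (n + 1) • rodrigues R (n + 1) + (2 * (n + 1)) • derivative (rodrigues R n) := by
  have hX : derivative ((X ^ 2 - 1 : R[X]) ^ (n + 1)) * X
      = (2 * (n + 1)) • ((X ^ 2 - 1) ^ (n + 1) + (X ^ 2 - 1) ^ n) := by
    rw [derivative_X_sq_sub_one_pow_succ]
    simp only [nsmul_eq_mul]
    ring
  have h := congrArg (derivative^[n + 1]) hX
  rw [iterate_derivative_derivative_mul_X, iterate_derivative_smul, iterate_map_add] at h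
  rw [derivative_rodrigues, derivative_rodrigues, rodrigues, mul_comm X]
  linear_combination h

end Polynomial

open scoped Nat

theorem one_div_two_pow_mul_factorial_succ_mul (n : ℕ) :
    1 / (2 ^ (n + 1) * (n + 1)! : ℝ) * (2 * (n + 1) : ℕ) = 1 / (2 ^ n * n !) := by
  push_cast [Nat.factorial_succ]
  field_simp
  ring

theorem legendre_eq_smul_rodrigues (n : ℕ) :
    legendre n = (1 / (2 ^ n * n ! : ℝ)) • rodrigues ℝ n :=
  rfl

theorem derivative_legendre_succ (n : ℕ) :
    derivative (legendre (n + 1)) = X * derivative (legendre n) + (n + 1) • legendre n := by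
  rw [legendre_eq_smul_rodrigues, legendre_eq_smul_rodrigues, derivative_smul, derivative_smul,
    derivative_rodrigues_succ, ← Nat.cast_smul_eq_nsmul ℝ, smul_smul,
    one_div_two_pow_mul_factorial_succ_mul, smul_add, mul_smul_comm, smul_comm]

theorem X_mul_derivative_legendre_succ (n : ℕ) :
    X * derivative (legendre (n + 1)) = (n + 1) • legendre (n + 1) + derivative (legendre n) := by
  rw [legendre_eq_smul_rodrigues, legendre_eq_smul_rodrigues, derivative_smul, derivative_smul,
    mul_smul_comm, X_mul_derivative_rodrigues_succ, smul_add, smul_comm,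
    ← Nat.cast_smul_eq_nsmul ℝ (2 * (n + 1)), smul_smul,
    one_div_two_pow_mul_factorial_succ_mul]

theorem one_add_X_mul_derivative_legendre (n : ℕ) :
    (1 + X) * derivative (legendre n)
      = ∑ j ∈ Finset.range n, (2 * (j : ℝ) + 1) • legendre j + (n : ℝ) • legendre n := by
  induction n with
  | zero => simp [legendre]
  | succ n ih =>
    rw [add_mul, one_mul] at ih ⊢
    rw [Finset.sum_range_succ]
    push_cast
    linear_combination (norm := module)
      derivative_legendre_succ n + X_mul_derivative_legendre_succ n + ih

/-- Expansion of the Koornwinder polynomial in Legendre polynomials: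
`K_n = -∑_{j<n} (2j+1) L_j + (n²+1) L_n`. -/
theorem koornwinder_legendre_expansion (n : ℕ) :
    koornwinder n
      = -(∑ j ∈ Finset.range n, (2 * (j : ℝ) + 1) • legendre j)
        + ((n : ℝ) ^ 2 + 1) • legendre n := by
  rw [koornwinder, neg_mul, one_add_X_mul_derivative_legendre]
  module
end

section
/- For all natural numbers m ≠ n, the Koornwinder polynomials are orthogonal with respect to the Lebesgue measure with a unit point mass adjoined at 1: (1/2)·∫_{−1}^{1} K_n(s)·K_m(s) ds + K_n(1)·K_m(1) = 0. -/
open Polynomial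

/-!
Integrating by parts `n` times against Rodrigues' formula shows that `L_n` is orthogonal on
`[-1, 1]` to every polynomial of degree `< n`, since all lower derivatives of `(X² - 1)ⁿ` vanish
at `±1`. For such a `q`, one more integration by parts gives `∫ K_n q = -2 q(1)` (as
`L_n(1) = 1`), while `K_n(1) = 1` because `L_n'(1) = n(n+1)/2`. Hence `K_n` is orthogonal to every
polynomial of degree `< n`, in particular to `K_m` for `m < n`.
-/

namespace Polynomial

variable {R : Type*} [CommRing R]

/-- The Taylor coefficients of `(X - a)ⁿ * q` at `a` are those of `q`, shifted by `n`. -/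
theorem eval_hasseDeriv_X_sub_C_pow_mul (a : R) (n k : ℕ) (q : R[X]) :
    (hasseDeriv k ((X - C a) ^ n * q)).eval a =
      if n ≤ k then (hasseDeriv (k - n) q).eval a else 0 := by
  rw [← taylor_coeff, taylor_mul, taylor_pow, taylor_apply (f := X - C a), sub_comp, X_comp,
    C_comp, add_sub_cancel_right, coeff_X_pow_mul', taylor_coeff]

theorem eval_iterate_derivative_X_sub_C_pow_mul_of_lt (a : R) {n k : ℕ} (hk : k < n)
    (q : R[X]) : (derivative^[k] ((X - C a) ^ n * q)).eval a = 0 := by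
  rw [← factorial_smul_hasseDeriv, LinearMap.smul_apply, eval_smul,
    eval_hasseDeriv_X_sub_C_pow_mul, if_neg (by omega), smul_zero]

theorem eval_iterate_derivative_X_sub_C_pow_mul_of_le (a : R) {n k : ℕ} (hk : n ≤ k)
    (q : R[X]) :
    (derivative^[k] ((X - C a) ^ n * q)).eval a = k.factorial * (hasseDeriv (k - n) q).eval a := by
  rw [← factorial_smul_hasseDeriv, LinearMap.smul_apply, eval_smul,
    eval_hasseDeriv_X_sub_C_pow_mul, if_pos hk, nsmul_eq_mul]

theorem natDegree_one_add_X_le : (1 + X : R[X]).natDegree ≤ 1 :=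
  (natDegree_add_le _ _).trans (by simp [natDegree_X_le])

theorem natDegree_mul_derivative_le {r : R[X]} (hr : r.natDegree ≤ 1) (p : R[X]) :
    (r * derivative p).natDegree ≤ p.natDegree := by
  rcases Nat.eq_zero_or_pos p.natDegree with hp | hp
  · simp [derivative_of_natDegree_zero hp]
  · have := natDegree_derivative_le p
    have := natDegree_mul_le (p := r) (q := derivative p)
    omega

end Polynomial

open intervalIntegral

theorem integral_eval_mul_eval_derivative (a b : ℝ) (p q : ℝ[X]) :
    ∫ s in a..b, p.eval s * (derivative q).eval s =
      p.eval b * q.eval b - p.eval a * q.eval a - ∫ s in a..b, (derivative p).eval s * q.eval s :=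
  integral_mul_deriv_eq_deriv_mul (fun x _ => p.hasDerivAt x) (fun x _ => q.hasDerivAt x)
    ((derivative p).continuous.intervalIntegrable _ _)
    ((derivative q).continuous.intervalIntegrable _ _)

theorem integral_eval_mul_eval_iterate_derivative {a b : ℝ} {k : ℕ} {g : ℝ[X]}
    (ha : ∀ j < k, (derivative^[j] g).eval a = 0) (hb : ∀ j < k, (derivative^[j] g).eval b = 0)
    (p : ℝ[X]) :
    ∫ s in a..b, p.eval s * (derivative^[k] g).eval s =
      (-1) ^ k * ∫ s in a..b, (derivative^[k] p).eval s * g.eval s := by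
  induction k generalizing p with
  | zero => simp
  | succ k ih =>
    rw [Function.iterate_succ_apply', integral_eval_mul_eval_derivative,
      ha k k.lt_succ_self, hb k k.lt_succ_self,
      ih (fun j hj => ha j (by omega)) (fun j hj => hb j (by omega)),
      ← Function.iterate_succ_apply]
    ring

theorem X_sq_sub_one_pow_eq (n : ℕ) :
    ((X : ℝ[X]) ^ 2 - 1) ^ n = (X - C 1) ^ n * (X - C (-1)) ^ n := by
  rw [← mul_pow, C_1, C_neg, C_1]
  ring

theorem eval_iterate_derivative_X_sq_sub_one_pow_of_lt {n k : ℕ} (hk : k < n) {a : ℝ}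
    (ha : a = 1 ∨ a = -1) : (derivative^[k] (((X : ℝ[X]) ^ 2 - 1) ^ n)).eval a = 0 := by
  rcases ha with rfl | rfl
  · rw [X_sq_sub_one_pow_eq, eval_iterate_derivative_X_sub_C_pow_mul_of_lt _ hk]
  · rw [X_sq_sub_one_pow_eq, mul_comm, eval_iterate_derivative_X_sub_C_pow_mul_of_lt _ hk]

theorem legendre_eval_one (n : ℕ) : (legendre n).eval 1 = 1 := by
  rw [legendre, eval_smul, X_sq_sub_one_pow_eq,
    eval_iterate_derivative_X_sub_C_pow_mul_of_le _ le_rfl, Nat.sub_self, hasseDeriv_zero']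
  simp only [eval_pow, eval_sub, eval_X, eval_C, smul_eq_mul]
  field_simp
  norm_num

theorem derivative_legendre_eval_one (n : ℕ) :
    (derivative (legendre n)).eval 1 = n * (n + 1) / 2 := by
  rw [legendre, derivative_smul, ← Function.iterate_succ_apply' derivative, eval_smul,
    X_sq_sub_one_pow_eq, eval_iterate_derivative_X_sub_C_pow_mul_of_le _ n.le_succ,
    Nat.succ_eq_add_one, add_tsub_cancel_left, hasseDeriv_one', derivative_X_sub_C_pow]
  simp only [eval_mul, eval_pow, eval_sub, eval_X, eval_C, smul_eq_mul, Nat.factorial_succ]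
  rcases Nat.eq_zero_or_pos n with rfl | hn
  · norm_num
  · rw [show (2 : ℝ) ^ n = 2 * 2 ^ (n - 1) by rw [← pow_succ']; congr 1; omega]
    push_cast
    field_simp
    norm_num

theorem natDegree_legendre_le (n : ℕ) : (legendre n).natDegree ≤ n := by
  have h : (((X : ℝ[X]) ^ 2 - 1) ^ n).natDegree ≤ n * 2 :=
    natDegree_pow_le_of_le n <| (natDegree_sub_le (X ^ 2 : ℝ[X]) 1).trans (by simp)
  exact (natDegree_smul_le _ _).trans <| (natDegree_iterate_derivative _ _).trans (by omega)

theorem integral_mul_legendre_eq_zero {n : ℕ} {p : ℝ[X]} (hp : p.natDegree < n) :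
    ∫ s in (-1)..1, p.eval s * (legendre n).eval s = 0 := by
  simp only [legendre, eval_smul, smul_eq_mul, mul_left_comm (p.eval _), integral_const_mul]
  rw [integral_eval_mul_eval_iterate_derivative
    (fun j hj => eval_iterate_derivative_X_sq_sub_one_pow_of_lt hj (.inr rfl))
    (fun j hj => eval_iterate_derivative_X_sq_sub_one_pow_of_lt hj (.inl rfl)),
    iterate_derivative_eq_zero hp]
  simp

theorem koornwinder_eval_one (n : ℕ) : (koornwinder n).eval 1 = 1 := by
  simp only [koornwinder, eval_add, eval_mul, eval_neg, eval_one, eval_X, eval_smul,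
    smul_eq_mul, legendre_eval_one, derivative_legendre_eval_one]
  ring

theorem natDegree_koornwinder_le (n : ℕ) : (koornwinder n).natDegree ≤ n := by
  refine (natDegree_add_le _ _).trans (max_le ?_ ((natDegree_smul_le _ _).trans ?_))
  · rw [neg_mul, natDegree_neg]
    exact (natDegree_mul_derivative_le natDegree_one_add_X_le _).trans (natDegree_legendre_le n)
  · exact natDegree_legendre_le n

theorem integral_koornwinder_mul {n : ℕ} {q : ℝ[X]} (hq : q.natDegree < n) :
    ∫ s in (-1)..1, (koornwinder n).eval s * q.eval s = -2 * q.eval 1 := by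
  have hdeg : (derivative ((1 + X) * q)).natDegree < n := by
    have := natDegree_derivative_le ((1 + X) * q)
    have := natDegree_mul_le (p := (1 + X : ℝ[X])) (q := q)
    have := natDegree_one_add_X_le (R := ℝ)
    omega
  have hsplit : (fun s => (koornwinder n).eval s * q.eval s) = fun s =>
      -(((1 + X) * q).eval s * (derivative (legendre n)).eval s) +
        ((n : ℝ) ^ 2 + n + 1) * (q.eval s * (legendre n).eval s) := by
    ext s
    simp only [koornwinder, eval_add, eval_mul, eval_neg, eval_one, eval_X, eval_smul,
      smul_eq_mul]
    ring
  rw [hsplit, integral_add, integral_neg, integral_const_mul, integral_eval_mul_eval_derivative,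
    integral_mul_legendre_eq_zero hdeg, integral_mul_legendre_eq_zero hq]
  · norm_num [legendre_eval_one]
  all_goals exact Continuous.intervalIntegrable (by fun_prop) _ _

theorem koornwinder_inner_eq_zero_of_natDegree_lt {n : ℕ} {q : ℝ[X]} (hq : q.natDegree < n) :
    (1 / 2) * (∫ s in (-1 : ℝ)..1, (koornwinder n).eval s * q.eval s)
      + (koornwinder n).eval 1 * q.eval 1 = 0 := by
  rw [integral_koornwinder_mul hq, koornwinder_eval_one]
  ring

open MeasureTheory intervalIntegral in
/-- Orthogonality of the Koornwinder polynomials with respect to the inner product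
`(1/2)∫_{-1}^1 f g ds + f(1) g(1)` (Lebesgue measure with a unit point mass at `1`). -/
theorem koornwinder_orthogonal {m n : ℕ} (hmn : m ≠ n) :
    (1 / 2) * (∫ s in (-1 : ℝ)..1, (koornwinder n).eval s * (koornwinder m).eval s)
      + (koornwinder n).eval 1 * (koornwinder m).eval 1 = 0 := by
  rcases hmn.lt_or_gt with h | h
  · exact koornwinder_inner_eq_zero_of_natDegree_lt ((natDegree_koornwinder_le m).trans_lt h)
  · simp_rw [mul_comm ((koornwinder n).eval _)]
    exact koornwinder_inner_eq_zero_of_natDegree_lt ((natDegree_koornwinder_le n).trans_lt h)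
end

section
/- The linear span of the family {(K_n, K_n(1)) : n ∈ ℕ}, where K_n is regarded as an element of L²([−1,1]; ℝ), is dense in the product space L²([−1,1]; ℝ) × ℝ. Consequently, after normalization, this family forms a Hilbert basis of L²([−1,1]; ℝ) × ℝ equipped with the inner product ⟨(f,a),(g,b)⟩ := (1/2)·∫_{−1}^{1} f(s)·g(s) ds + a·b. -/
open Polynomial

open MeasureTheory

/-- Lebesgue measure restricted to `[-1,1]`. -/
noncomputable def mu01 : Measure ℝ := volume.restrict (Set.Icc (-1 : ℝ) 1)

/-- Polynomials (in particular Koornwinder polynomials) belong to `L²([-1,1])`. -/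
theorem koornwinder_memLp (n : ℕ) :
    MemLp (fun s => (koornwinder n).eval s) 2 mu01 := by
  haveI : IsFiniteMeasure mu01 := by
    constructor
    rw [mu01, Measure.restrict_apply_univ, Real.volume_Icc]
    exact ENNReal.ofReal_lt_top
  obtain ⟨C, hC⟩ := (isCompact_Icc (a := (-1:ℝ)) (b := 1)).exists_bound_of_continuousOn
    ((koornwinder n).continuous_aeval.continuousOn)
  exact MemLp.of_bound ((koornwinder n).continuous_aeval).aestronglyMeasurable C
    ((ae_restrict_iff' measurableSet_Icc).mpr (ae_of_all _ fun x hx => hC x hx))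

/-- The pair `(K_n, K_n(1))` viewed as an element of `L²([-1,1]) × ℝ`. -/
noncomputable def koornwinderPair (n : ℕ) : Lp ℝ 2 mu01 × ℝ :=
  ((koornwinder_memLp n).toLp _, (koornwinder n).eval 1)

/-!
`K_n` has degree exactly `n`: its coefficient of `sⁿ` is `n² + 1` times that of `L_n`. Hence the
`K_n` span `ℝ[X]`, and the span in question is the image of `ℝ[X]` under `q ↦ (q, q(1))`.
Polynomials are dense in `L²([-1,1])` by Weierstrass, while `((1 + s)/2)ᵏ → 0` in `L²` and takes
the value `1` at `s = 1`. So `(0, 1)` lies in the closure of the span, and subtracting multiples of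
it from the `(q, q(1))` puts every `(f, 0)` there too.
-/

open Filter Topology Set

namespace Polynomial

section IterateDerivative

variable {R : Type*} [Semiring R] [IsAddTorsionFree R]

theorem natDegree_iterate_derivative_eq (p : R[X]) (k : ℕ) :
    (derivative^[k] p).natDegree = p.natDegree - k := by
  induction k with
  | zero => rfl
  | succ k ih => rw [Function.iterate_succ_apply', natDegree_derivative, ih, Nat.sub_sub]

theorem degree_iterate_derivative {p : R[X]} {k : ℕ} (hk : k ≤ p.natDegree) (hp : p ≠ 0) :
    (derivative^[k] p).degree = ↑(p.natDegree - k) := by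
  induction k with
  | zero => exact degree_eq_natDegree hp
  | succ k ih =>
    rw [Function.iterate_succ_apply',
      degree_derivative (by rw [natDegree_iterate_derivative_eq]; omega),
      natDegree_iterate_derivative_eq, Nat.sub_sub]

end IterateDerivative

theorem degree_neg_one_add_X_mul_derivative_add_smul {K : Type*} [Field K] [CharZero K]
    {p : K[X]} {c : K} (hc : c ≠ p.natDegree) :
    (-(1 + X) * derivative p + c • p).degree = p.degree := by
  obtain hn | ⟨m, hm⟩ : p.natDegree = 0 ∨ ∃ m, p.natDegree = m + 1 :=
    (Nat.eq_zero_or_eq_succ_pred _).imp_right fun h => ⟨_, h⟩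
  · rw [derivative_eq_zero.2 hn, mul_zero, zero_add, smul_eq_C_mul,
      degree_C_mul (by simpa [hn] using hc)]
  have hle : (-(1 + X) * derivative p + c • p).natDegree ≤ m + 1 := by
    refine natDegree_add_le_of_degree_le (natDegree_mul_le.trans ?_)
      ((natDegree_smul_le _ _).trans hm.le)
    have : (-(1 + X : K[X])).natDegree ≤ 1 := by compute_degree
    rw [natDegree_derivative, hm]
    omega
  have hcoeff : (-(1 + X) * derivative p + c • p).coeff (m + 1) =
      (c - p.natDegree) * p.leadingCoeff := by
    have : p.coeff (m + 2) = 0 := coeff_eq_zero_of_natDegree_lt (by omega)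
    simp [coeff_derivative, add_mul, coeff_X_mul, leadingCoeff, hm, this]
    ring
  have hp : p.leadingCoeff ≠ 0 := leadingCoeff_ne_zero.2 (by rintro rfl; simp at hm)
  rw [degree_eq_of_le_of_coeff_ne_zero (degree_le_of_natDegree_le hle)
      (hcoeff ▸ mul_ne_zero (sub_ne_zero.2 hc) hp),
    degree_eq_natDegree (leadingCoeff_ne_zero.1 hp), hm]

end Polynomial

theorem legendre_degree (n : ℕ) : (legendre n).degree = n := by
  have hmonic : ((X : ℝ[X]) ^ 2 - 1).Monic := by monicity!
  have hdeg : (((X : ℝ[X]) ^ 2 - 1) ^ n).natDegree = 2 * n := by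
    have : ((X : ℝ[X]) ^ 2 - 1).natDegree = 2 := by compute_degree!
    rw [hmonic.natDegree_pow, this, mul_comm]
  rw [legendre, smul_eq_C_mul, degree_C_mul (by positivity),
    degree_iterate_derivative (by omega) (hmonic.pow n).ne_zero, hdeg]
  congr 1
  omega

theorem koornwinder_degree (n : ℕ) : (koornwinder n).degree = n := by
  have hc : ((n : ℝ) ^ 2 + n + 1) ≠ (legendre n).natDegree := by
    rw [natDegree_eq_of_degree_eq_some (legendre_degree n)]
    nlinarith
  rw [koornwinder, degree_neg_one_add_X_mul_derivative_add_smul hc, legendre_degree]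

noncomputable def koornwinderSequence : Polynomial.Sequence ℝ :=
  ⟨koornwinder, koornwinder_degree⟩

theorem span_range_koornwinder : Submodule.span ℝ (Set.range koornwinder) = ⊤ :=
  koornwinderSequence.span fun n => (leadingCoeff_ne_zero.2 (koornwinderSequence.ne_zero n)).isUnit

theorem LinearMap.denseRange_prod_of_tendsto_zero {𝕜 D E ι : Type*} [Field 𝕜]
    [TopologicalSpace 𝕜] [IsTopologicalRing 𝕜] [AddCommGroup D] [Module 𝕜 D] [AddCommGroup E]
    [Module 𝕜 E] [TopologicalSpace E] [IsTopologicalAddGroup E] [ContinuousSMul 𝕜 E]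
    {l : Filter ι} [l.NeBot] (T : D →ₗ[𝕜] E) (φ : D →ₗ[𝕜] 𝕜) (hT : DenseRange T) (u : ι → D)
    (hTu : Tendsto (T ∘ u) l (𝓝 0)) (hφu : ∀ i, φ (u i) = 1) :
    DenseRange (T.prod φ) := by
  set W := (LinearMap.range (T.prod φ)).topologicalClosure
  have hW : IsClosed (W : Set (E × 𝕜)) := Submodule.isClosed_topologicalClosure _
  have h01 : ((0 : E), (1 : 𝕜)) ∈ W :=
    hW.mem_of_tendsto (hTu.prodMk_nhds tendsto_const_nhds) <| .of_forall fun i =>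
      Submodule.le_topologicalClosure _ ⟨u i, by simp [hφu]⟩
  have hfst (e : E) : (e, (0 : 𝕜)) ∈ W := by
    refine hT.induction_on (p := fun e => (e, (0 : 𝕜)) ∈ W) e
      (hW.preimage (continuous_id.prodMk continuous_const)) fun d => ?_
    have : (T d, (0 : 𝕜)) = T.prod φ d - φ d • ((0 : E), (1 : 𝕜)) := by simp
    rw [this]
    exact W.sub_mem (Submodule.le_topologicalClosure _ ⟨d, rfl⟩) (W.smul_mem _ h01)
  rw [DenseRange, ← LinearMap.coe_range, Submodule.dense_iff_topologicalClosure_eq_top]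
  refine Submodule.eq_top_iff'.2 fun z => ?_
  have : z = (z.1, 0) + z.2 • ((0 : E), (1 : 𝕜)) := by simp
  rw [this]
  exact W.add_mem (hfst z.1) (W.smul_mem _ h01)

theorem ContinuousOn.memLp_restrict_of_isCompact {X E : Type*} [TopologicalSpace X] [T2Space X]
    [MeasurableSpace X] [OpensMeasurableSpace X] [NormedAddCommGroup E] {μ : Measure X}
    [IsFiniteMeasureOnCompacts μ] {s : Set X} (hs : IsCompact s) {f : X → E}
    (hf : ContinuousOn f s) (p : ENNReal) : MemLp f p (μ.restrict s) := by
  have : IsFiniteMeasure (μ.restrict s) := isFiniteMeasure_restrict.2 hs.measure_lt_top.ne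
  obtain ⟨C, hC⟩ := hs.exists_bound_of_continuousOn hf
  exact .of_bound (hf.aestronglyMeasurable_of_isCompact hs hs.measurableSet) C
    (ae_restrict_of_forall_mem hs.measurableSet hC)

theorem MeasureTheory.Lp.tendsto_zero_of_ae_tendsto_of_ae_bound {α E : Type*}
    [MeasurableSpace α] {μ : Measure α} [IsFiniteMeasure μ] [NormedAddCommGroup E] {p : ENNReal}
    [Fact (1 ≤ p)] (hp : p ≠ ⊤) {f : ℕ → Lp E p μ} {C : ℝ} (hbound : ∀ n, ∀ᵐ x ∂μ, ‖f n x‖ ≤ C)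
    (hlim : ∀ᵐ x ∂μ, Tendsto (fun n => f n x) atTop (𝓝 0)) : Tendsto f atTop (𝓝 0) := by
  rw [tendsto_Lp_iff_tendsto_eLpNorm']
  refine tendsto_Lp_finite_of_tendsto_ae Fact.out hp (fun n => Lp.aestronglyMeasurable _)
    (Lp.memLp 0) ?_ ?_
  · refine unifIntegrable_of Fact.out hp (fun n => Lp.aestronglyMeasurable _) fun _ _ =>
      ⟨C.toNNReal + 1, fun n => ?_⟩
    have : {x | C.toNNReal + 1 ≤ ‖f n x‖₊}.indicator (f n) =ᵐ[μ] 0 := by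
      filter_upwards [hbound n] with x hx
      refine indicator_of_notMem (fun hx' => ?_) _
      have := NNReal.coe_le_coe.2 hx'
      push_cast at this
      linarith [C.le_coe_toNNReal]
    rw [eLpNorm_congr_ae this, eLpNorm_zero]
    exact zero_le
  · filter_upwards [hlim, Lp.coeFn_zero E p μ] with x hx h0
    rwa [h0]

namespace Polynomial

theorem memLp_restrict_Icc (a b : ℝ) (p : ENNReal) (q : ℝ[X]) :
    MemLp (fun x => q.eval x) p (volume.restrict (Icc a b)) :=
  q.continuous.continuousOn.memLp_restrict_of_isCompact isCompact_Icc p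

noncomputable def toLpIcc (a b : ℝ) (p : ENNReal) [Fact (1 ≤ p)] :
    ℝ[X] →ₗ[ℝ] Lp ℝ p (volume.restrict (Icc a b)) where
  toFun q := (memLp_restrict_Icc a b p q).toLp _
  map_add' q r := by simp only [eval_add, ← MemLp.toLp_add]; rfl
  map_smul' c q := by
    simp only [eval_smul, smul_eq_mul, RingHom.id_apply, ← MemLp.toLp_const_smul]; rfl

variable {a b : ℝ} {p : ENNReal} [Fact (1 ≤ p)]

theorem coeFn_toLpIcc (q : ℝ[X]) :
    toLpIcc a b p q =ᵐ[volume.restrict (Icc a b)] fun x => q.eval x :=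
  MemLp.coeFn_toLp (memLp_restrict_Icc a b p q)

theorem denseRange_toLpIcc (hp : p ≠ ⊤) : DenseRange (toLpIcc a b p) := by
  set μ := volume.restrict (Icc a b)
  set M : ℝ := measureUnivNNReal μ ^ p.toReal⁻¹
  refine dense_closure.mp <| (BoundedContinuousFunction.toLp_denseRange ℝ μ ℝ hp).mono <|
    range_subset_iff.2 fun g => Metric.mem_closure_iff.2 fun ε hε => ?_
  obtain ⟨q, hq⟩ := exists_polynomial_near_of_continuousOn a b g g.continuous.continuousOn
    (ε / (M + 1)) (by positivity)
  refine ⟨_, ⟨q, rfl⟩, ?_⟩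
  rw [dist_eq_norm]
  calc _ ≤ M * (ε / (M + 1)) := by
        refine Lp.norm_le_of_ae_bound (by positivity) ?_
        filter_upwards [Lp.coeFn_sub (BoundedContinuousFunction.toLp p μ ℝ g) (toLpIcc a b p q),
          BoundedContinuousFunction.coeFn_toLp p μ ℝ g, coeFn_toLpIcc (p := p) q,
          ae_restrict_mem measurableSet_Icc] with x hsub hg hq' hx
        rw [hsub, Pi.sub_apply, hg, hq', Real.norm_eq_abs, abs_sub_comm]
        exact (hq x hx).le
    _ < ε := by
        rw [← mul_div_assoc, div_lt_iff₀ (by positivity)]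
        linarith

theorem tendsto_toLpIcc_pow (hab : a < b) (hp : p ≠ ⊤) :
    Tendsto (fun k => toLpIcc a b p ((C (b - a)⁻¹ * (X - C a)) ^ k)) atTop (𝓝 0) := by
  have hcoe : ∀ᵐ x ∂volume.restrict (Icc a b), ∀ k,
      toLpIcc a b p ((C (b - a)⁻¹ * (X - C a)) ^ k) x = ((x - a) / (b - a)) ^ k := by
    refine ae_all_iff.2 fun k => ?_
    filter_upwards [coeFn_toLpIcc (p := p) ((C (b - a)⁻¹ * (X - C a)) ^ k)] with x hx
    simp [hx, div_eq_inv_mul]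
  have hmem : ∀ᵐ x ∂volume.restrict (Icc a b), x ∈ Icc a b := ae_restrict_mem measurableSet_Icc
  have hba : 0 < b - a := sub_pos.2 hab
  refine Lp.tendsto_zero_of_ae_tendsto_of_ae_bound hp (C := 1) (fun k => ?_) ?_
  · filter_upwards [hcoe, hmem] with x hx ⟨hax, hxb⟩
    rw [hx, norm_pow, Real.norm_of_nonneg (div_nonneg (sub_nonneg.2 hax) hba.le)]
    exact pow_le_one₀ (div_nonneg (sub_nonneg.2 hax) hba.le) ((div_le_one hba).2 (by linarith))
  · filter_upwards [hcoe, hmem, (volume.restrict (Icc a b)).ae_ne b] with x hx ⟨hax, hxb⟩ hxb'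
    simp only [hx]
    exact tendsto_pow_atTop_nhds_zero_of_lt_one (div_nonneg (sub_nonneg.2 hax) hba.le)
      ((div_lt_one hba).2 (by linarith [lt_of_le_of_ne hxb hxb']))

end Polynomial

/-- The linear span of the family `{(K_n, K_n(1)) : n ∈ ℕ}` is dense in
`L²([-1,1]; ℝ) × ℝ`; consequently, after normalization, this family forms a Hilbert basis
of this space for the inner product `⟨(f,a),(g,b)⟩ = (1/2)∫_{-1}^1 f g + a b`, whose norm is
equivalent to the product norm. -/
theorem koornwinderPair_span_dense :
    Dense ((Submodule.span ℝ (Set.range koornwinderPair) :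
      Submodule ℝ (Lp ℝ 2 mu01 × ℝ)) : Set (Lp ℝ 2 mu01 × ℝ)) := by
  change Dense (Submodule.span ℝ (range ((toLpIcc (-1) 1 2).prod (leval 1) ∘ koornwinder)) :
    Set (Lp ℝ 2 (volume.restrict (Icc (-1 : ℝ) 1)) × ℝ))
  rw [Set.range_comp, Submodule.span_image, span_range_koornwinder, Submodule.map_top,
    LinearMap.coe_range]
  exact LinearMap.denseRange_prod_of_tendsto_zero _ _ (denseRange_toLpIcc ENNReal.ofNat_ne_top) _
    (tendsto_toLpIcc_pow (by norm_num) ENNReal.ofNat_ne_top) fun k => by simp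
end

section
/- Under the stated hypotheses, the following dissipativity estimate holds: (1/τ)·∫_{−τ}^{0} ⟨ψ′(θ), ψ(θ)⟩ dθ + ⟨L_S ψ(0) + B ψ(−τ) + ∫_{−τ}^{0} C(s) ψ(s) ds, ψ(0)⟩ ≤ ω·( (1/τ)·∫_{−τ}^{0} |ψ(θ)|² dθ + |ψ(0)|² ), where ω := 1 + 1/(2τ) + |L_S| + (τ/2)·|B|² + (τ/4)·‖C‖²_{L²}. -/
open MeasureTheory intervalIntegral Set
open scoped RealInnerProductSpace

/-!
By the fundamental theorem of calculus, `∫ ⟪ψ', ψ⟫ = (|ψ 0|² - |ψ (-τ)|²) / 2`. The gain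
`-|ψ (-τ)|² / (2τ)` absorbs the delayed term `⟪B ψ(-τ), ψ 0⟫` after Young's inequality with weight
`τ`. The distributed term is bounded pointwise by `|C s| |ψ s| |ψ 0|` and Young's inequality with
weight `τ / 2`, which produces `(1/τ) ∫ |ψ|²`; that is absorbed by the summand `1` of `ω`. All
other terms are bounded by `(ω - 1) |ψ 0|²`.
-/

theorem mul_le_half_mul_sq_add {ε : ℝ} (hε : 0 < ε) (x y : ℝ) :
    x * y ≤ ε / 2 * x ^ 2 + 1 / (2 * ε) * y ^ 2 := by
  have h := two_mul_le_add_mul_sq (a := x) (b := y) hε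
  have hsplit : ε / 2 * x ^ 2 + 1 / (2 * ε) * y ^ 2 = (ε * x ^ 2 + ε⁻¹ * y ^ 2) / 2 := by ring
  linarith

section InnerProductSpace

variable {E F : Type*} [NormedAddCommGroup E] [InnerProductSpace ℝ E]
  [NormedAddCommGroup F] [InnerProductSpace ℝ F]

theorem integral_inner_deriv_self {f f' : ℝ → E} {a b : ℝ} (hab : a ≤ b)
    (hf : ∀ x ∈ Icc a b, HasDerivWithinAt f (f' x) (Icc a b) x)
    (hf' : ContinuousOn f' (Icc a b)) :
    ∫ x in a..b, ⟪f' x, f x⟫ = (‖f b‖ ^ 2 - ‖f a‖ ^ 2) / 2 := by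
  have hfc : ContinuousOn f (Icc a b) := fun x hx => (hf x hx).continuousWithinAt
  have hderiv : ∀ x ∈ Ioo a b, HasDerivAt (‖f ·‖ ^ 2) (2 * ⟪f' x, f x⟫) x := fun x hx => by
    simpa only [real_inner_comm] using
      ((hf x (Ioo_subset_Icc_self hx)).hasDerivAt (Icc_mem_nhds hx.1 hx.2)).norm_sq
  have hint : IntervalIntegrable (fun x => 2 * ⟪f' x, f x⟫) volume a b :=
    ((hf'.inner hfc).const_mul 2).intervalIntegrable_of_Icc hab
  have hftc :=
    integral_eq_sub_of_hasDerivAt_of_le (f := (‖f ·‖ ^ 2)) hab (hfc.norm.pow 2) hderiv hint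
  rw [intervalIntegral.integral_const_mul] at hftc
  linarith

theorem real_inner_apply_le_opNorm_mul (T : E →L[ℝ] F) (x : E) (y : F) :
    ⟪T x, y⟫ ≤ ‖T‖ * ‖x‖ * ‖y‖ :=
  (real_inner_le_norm _ _).trans (mul_le_mul_of_nonneg_right (T.le_opNorm x) (norm_nonneg y))

theorem real_inner_apply_le_young (T : E →L[ℝ] F) (x : E) (y : F) {ε : ℝ} (hε : 0 < ε) :
    ⟪T x, y⟫ ≤ ε / 2 * ‖T‖ ^ 2 * ‖y‖ ^ 2 + 1 / (2 * ε) * ‖x‖ ^ 2 := by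
  have h := mul_le_half_mul_sq_add hε (‖T‖ * ‖y‖) ‖x‖
  linarith [real_inner_apply_le_opNorm_mul T x y]

theorem real_inner_intervalIntegral_apply_le {C : ℝ → E →L[ℝ] F} {ψ : ℝ → E} {a b ε : ℝ}
    (hab : a ≤ b) (hε : 0 < ε) (hC : IntervalIntegrable (fun s => ‖C s‖ ^ 2) volume a b)
    (hψ : IntervalIntegrable (fun s => ‖ψ s‖ ^ 2) volume a b) (v : F) :
    ⟪∫ s in a..b, C s (ψ s), v⟫
      ≤ ε / 2 * ‖v‖ ^ 2 * (∫ s in a..b, ‖C s‖ ^ 2) + 1 / (2 * ε) * ∫ s in a..b, ‖ψ s‖ ^ 2 := by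
  -- bounding `‖v‖ • C s (ψ s)` pointwise needs no integrability of `s ↦ C s (ψ s)`
  have hpointwise :
      ∀ s, ‖‖v‖ • C s (ψ s)‖ ≤ ε / 2 * ‖v‖ ^ 2 * ‖C s‖ ^ 2 + 1 / (2 * ε) * ‖ψ s‖ ^ 2 := by
    intro s
    have h := mul_le_half_mul_sq_add hε (‖v‖ * ‖C s‖) ‖ψ s‖
    rw [norm_smul, norm_norm]
    nlinarith [(C s).le_opNorm (ψ s), norm_nonneg v]
  have hbound := norm_integral_le_of_norm_le hab
    (Filter.Eventually.of_forall fun s _ => hpointwise s) ((hC.const_mul _).add (hψ.const_mul _))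
  rw [intervalIntegral.integral_smul, norm_smul, norm_norm,
    integral_add (hC.const_mul _) (hψ.const_mul _), intervalIntegral.integral_const_mul,
    intervalIntegral.integral_const_mul] at hbound
  calc ⟪∫ s in a..b, C s (ψ s), v⟫ ≤ ‖v‖ * ‖∫ s in a..b, C s (ψ s)‖ := by
        rw [mul_comm]; exact real_inner_le_norm _ _
    _ ≤ _ := hbound

end InnerProductSpace

theorem dde_generator_dissipative_general (d : ℕ) (τ : ℝ) (hτ : 0 < τ)
    (LS B : EuclideanSpace ℝ (Fin d) →L[ℝ] EuclideanSpace ℝ (Fin d))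
    (C : ℝ → (EuclideanSpace ℝ (Fin d) →L[ℝ] EuclideanSpace ℝ (Fin d)))
    (hCL2 : IntervalIntegrable (fun s => ‖C s‖ ^ 2) volume (-τ) 0)
    (ψ ψ' : ℝ → EuclideanSpace ℝ (Fin d))
    (hψ : ∀ θ ∈ Icc (-τ) 0, HasDerivWithinAt ψ (ψ' θ) (Icc (-τ) 0) θ)
    (hψ' : ContinuousOn ψ' (Icc (-τ) 0)) :
    (1 / τ) * (∫ θ in (-τ)..0, ⟪ψ' θ, ψ θ⟫)
        + ⟪LS (ψ 0) + B (ψ (-τ)) + ∫ s in (-τ)..0, C s (ψ s), ψ 0⟫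
      ≤ (1 + 1 / (2 * τ) + ‖LS‖ + (τ / 2) * ‖B‖ ^ 2
            + (τ / 4) * ∫ s in (-τ)..0, ‖C s‖ ^ 2)
          * ((1 / τ) * (∫ θ in (-τ)..0, ‖ψ θ‖ ^ 2) + ‖ψ 0‖ ^ 2) := by
  have hτ' : -τ ≤ 0 := by linarith
  have hψc : ContinuousOn ψ (Icc (-τ) 0) := fun θ hθ => (hψ θ hθ).continuousWithinAt
  have hψsq : IntervalIntegrable (fun s => ‖ψ s‖ ^ 2) volume (-τ) 0 :=
    (hψc.norm.pow 2).intervalIntegrable_of_Icc hτ'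
  have hL := real_inner_apply_le_opNorm_mul LS (ψ 0) (ψ 0)
  have hB := real_inner_apply_le_young B (ψ (-τ)) (ψ 0) hτ
  have hC := real_inner_intervalIntegral_apply_le hτ' (half_pos hτ) hCL2 hψsq (ψ 0)
  have hP : 0 ≤ 1 / τ * ∫ θ in (-τ)..0, ‖ψ θ‖ ^ 2 :=
    mul_nonneg (by positivity) (integral_nonneg hτ' fun _ _ => sq_nonneg _)
  have hω_sub_one :
      0 ≤ 1 / (2 * τ) + ‖LS‖ + τ / 2 * ‖B‖ ^ 2 + τ / 4 * ∫ s in (-τ)..0, ‖C s‖ ^ 2 := by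
    have := integral_nonneg (μ := volume) hτ' fun s _ => sq_nonneg ‖C s‖
    positivity
  rw [show τ / 2 / 2 = τ / 4 by ring, show 1 / (2 * (τ / 2)) = 1 / τ by ring] at hC
  rw [inner_add_left, inner_add_left, integral_inner_deriv_self hτ' hψ hψ']
  -- `linarith` would treat `(2 * τ)⁻¹` as an atom unrelated to `τ⁻¹`
  simp only [one_div, mul_inv_rev] at hB hC hP hω_sub_one ⊢
  linarith [mul_nonneg hω_sub_one hP, sq_nonneg ‖ψ 0‖]

/-- Dissipativity estimate for the DDE generator: for `ψ` continuously differentiable on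
`[-τ,0]` with values in `ℝ^d`,
`(1/τ)∫⟨ψ',ψ⟩ + ⟨L_S ψ(0) + B ψ(-τ) + ∫ C(s)ψ(s) ds, ψ(0)⟩
  ≤ ω ((1/τ)∫|ψ|² + |ψ(0)|²)`
with `ω = 1 + 1/(2τ) + |L_S| + (τ/2)|B|² + (τ/4)‖C‖²_{L²}`. -/
theorem dde_generator_dissipative (d : ℕ) (hd : 1 ≤ d) (τ : ℝ) (hτ : 0 < τ)
    (LS B : EuclideanSpace ℝ (Fin d) →L[ℝ] EuclideanSpace ℝ (Fin d))
    (C : ℝ → (EuclideanSpace ℝ (Fin d) →L[ℝ] EuclideanSpace ℝ (Fin d)))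
    (hCmeas : AEStronglyMeasurable C (volume.restrict (Icc (-τ) 0)))
    (hCL2 : IntervalIntegrable (fun s => ‖C s‖ ^ 2) volume (-τ) 0)
    (ψ ψ' : ℝ → EuclideanSpace ℝ (Fin d))
    (hψ : ∀ θ ∈ Icc (-τ) 0, HasDerivWithinAt ψ (ψ' θ) (Icc (-τ) 0) θ)
    (hψ' : ContinuousOn ψ' (Icc (-τ) 0))
    (hCψ : IntervalIntegrable (fun s => C s (ψ s)) volume (-τ) 0) :
    (1 / τ) * (∫ θ in (-τ)..0, ⟪ψ' θ, ψ θ⟫)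
        + ⟪LS (ψ 0) + B (ψ (-τ)) + ∫ s in (-τ)..0, C s (ψ s), ψ 0⟫
      ≤ (1 + 1 / (2 * τ) + ‖LS‖ + (τ / 2) * ‖B‖ ^ 2
            + (τ / 4) * ∫ s in (-τ)..0, ‖C s‖ ^ 2)
          * ((1 / τ) * (∫ θ in (-τ)..0, ‖ψ θ‖ ^ 2) + ‖ψ 0‖ ^ 2) :=
  dde_generator_dissipative_general d τ hτ LS B C hCL2 ψ ψ' hψ hψ'
end

section
/- Let X be a real Hilbert space and M : X → X a continuous linear map such that ⟨M x, x⟩ ≤ ω·‖x‖² for every x ∈ X, where ω is a real constant. Then for every t ≥ 0 and every x ∈ X, ‖exp(t·M) x‖ ≤ e^{ω t}·‖x‖, where exp denotes the operator exponential of the bounded operator t·M. -/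
open scoped RealInnerProductSpace

/-!
Writing `M = ω + N`, the scalar part contributes the factor `e^{ωt}` to `exp (t • M)`, and `N`
is dissipative: `⟪N x, x⟫ ≤ 0`. Along a trajectory `u s = exp (s • N) x` we have `u' = N u`, so
`(‖u‖²)' = 2 ⟪u, N u⟫ ≤ 0` and the norm of `u` can only decrease.
-/

theorem NormedSpace.exp_algebraMap_add {𝔸 : Type*} [NormedRing 𝔸] [NormedAlgebra ℝ 𝔸]
    [CompleteSpace 𝔸] (c : ℝ) (a : 𝔸) :
    NormedSpace.exp (algebraMap ℝ 𝔸 c + a) = Real.exp c • NormedSpace.exp a := by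
  -- `exp_add_of_commute` is stated for normed `ℚ`-algebras
  let _ : NormedAlgebra ℚ 𝔸 := .restrictScalars ℚ ℝ 𝔸
  rw [NormedSpace.exp_add_of_commute (Algebra.commutes c a), ← NormedSpace.algebraMap_exp_comm,
    Algebra.smul_def, Real.exp_eq_exp_ℝ]

section Dissipative

variable {E : Type*} [NormedAddCommGroup E] [InnerProductSpace ℝ E]

theorem antitone_norm_of_inner_deriv_nonpos {u u' : ℝ → E}
    (hu : ∀ s, HasDerivAt u (u' s) s) (hu' : ∀ s, ⟪u s, u' s⟫ ≤ 0) :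
    Antitone (‖u ·‖) := by
  have hsq : Antitone (‖u ·‖ ^ 2) :=
    antitone_of_hasDerivAt_nonpos (fun s => (hu s).norm_sq)
      fun s => mul_nonpos_of_nonneg_of_nonpos zero_le_two (hu' s)
  intro a b hab
  exact (pow_le_pow_iff_left₀ (norm_nonneg _) (norm_nonneg _) two_ne_zero).mp (hsq hab)

variable [CompleteSpace E]

theorem hasDerivAt_exp_smul_apply (N : E →L[ℝ] E) (x : E) (s : ℝ) :
    HasDerivAt (fun r : ℝ => NormedSpace.exp (r • N) x) (N (NormedSpace.exp (s • N) x)) s := by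
  simpa using (hasDerivAt_exp_smul_const' N s).clm_apply (hasDerivAt_const s x)

theorem norm_exp_smul_apply_le_of_inner_le_zero {N : E →L[ℝ] E} (hN : ∀ x, ⟪N x, x⟫ ≤ 0)
    {t : ℝ} (ht : 0 ≤ t) (x : E) :
    ‖NormedSpace.exp (t • N) x‖ ≤ ‖x‖ := by
  simpa using antitone_norm_of_inner_deriv_nonpos (hasDerivAt_exp_smul_apply N x)
    (fun s => real_inner_comm (N _) _ ▸ hN _) ht

end Dissipative

/-- If `M` is a bounded operator on a real Hilbert space `X` with `⟨Mx, x⟩ ≤ ω ‖x‖²` for all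
`x`, then the operator exponential satisfies `‖exp(tM) x‖ ≤ e^{ωt} ‖x‖` for all `t ≥ 0`. -/
theorem norm_exp_apply_le_of_inner_le {X : Type*} [NormedAddCommGroup X]
    [InnerProductSpace ℝ X] [CompleteSpace X] (M : X →L[ℝ] X) (ω : ℝ)
    (h : ∀ x : X, ⟪M x, x⟫ ≤ ω * ‖x‖ ^ 2) :
    ∀ t : ℝ, 0 ≤ t → ∀ x : X,
      ‖(NormedSpace.exp (t • M)) x‖ ≤ Real.exp (ω * t) * ‖x‖ := by
  intro t ht x
  set N : X →L[ℝ] X := M - ω • 1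
  have hN : ∀ y, ⟪N y, y⟫ ≤ 0 := fun y => by
    simp only [N, sub_apply, smul_apply, one_apply_eq_self, inner_sub_left, real_inner_smul_left,
      real_inner_self_eq_norm_sq]
    linarith [h y]
  have hsplit : t • M = algebraMap ℝ _ (ω * t) + t • N := by
    rw [Algebra.algebraMap_eq_smul_one]
    module
  rw [hsplit, NormedSpace.exp_algebraMap_add, smul_apply, norm_smul,
    Real.norm_of_nonneg (Real.exp_pos _).le]
  exact mul_le_mul_of_nonneg_left (norm_exp_smul_apply_le_of_inner_le_zero hN ht x)
    (Real.exp_pos _).le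
end

section
/- Under the stated hypotheses, set ε := sup_{t∈[0,T*]} ‖T(t)u₀ − S(t)(Π u₀)‖ and D := ∫₀^{T*} sup_{t∈[s,T*]} ‖(T(t−s) − S(t−s)∘Π)(G(u(s)))‖ ds (assumed finite, with integrable integrand). Then for every t ∈ [0,T*], ‖u(t) − v(t)‖ ≤ (ε + D)·exp( M·K·T*·e^{ω T*} ). -/
/-!
Subtracting the two mild equations splits `u t - v t` into the mismatch of the initial data
(at most `ε`), the mismatch of the propagators acting on `G (u s)` (at most `dN s`, which
integrates to at most `D`), and `S (t - s) (Π (G (u s) - G (v s)))`, of norm at most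
`M e^{ω T*} K ‖u s - v s‖`. Hence `w = ‖u - v‖` satisfies
`w t ≤ ε + D + M K e^{ω T*} ∫₀ᵗ w`, and the integral form of Grönwall's inequality, obtained
from the differential one applied to `t ↦ ∫₀ᵗ w`, gives `w t ≤ (ε + D) exp (M K e^{ω T*} t)`.
-/

open MeasureTheory intervalIntegral Set Filter Topology

section OperatorFamilies

variable {α β 𝕜 E F : Type*} [TopologicalSpace α] [TopologicalSpace β] [NontriviallyNormedField 𝕜]
  [NormedAddCommGroup E] [NormedSpace 𝕜 E] [NormedAddCommGroup F] [NormedSpace 𝕜 F]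

theorem ContinuousOn.clm_apply_of_norm_le {C : β → E →L[𝕜] F} {s : Set β} {B : ℝ}
    (hC : ∀ x, ContinuousOn (fun t => C t x) s) (hB : ∀ t ∈ s, ‖C t‖ ≤ B)
    {A : Set α} {f : α → β} {g : α → E} (hf : ContinuousOn f A) (hfs : MapsTo f A s)
    (hg : ContinuousOn g A) :
    ContinuousOn (fun a => C (f a) (g a)) A := by
  intro a ha
  have hfixed : ContinuousWithinAt (fun b => C (f b) (g a)) A a :=
    (hC (g a) (f a) (hfs ha)).comp (hf a ha) hfs
  have hsmall : Tendsto (fun b => C (f b) (g b - g a)) (𝓝[A] a) (𝓝 0) := by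
    refine squeeze_zero_norm' ?_ (by simpa using ((hg a ha).sub_const (g a)).norm.const_mul B)
    filter_upwards [self_mem_nhdsWithin] with b hb
    exact (C (f b)).le_of_opNorm_le (hB _ (hfs hb)) _
  simpa [ContinuousWithinAt] using hsmall.add hfixed

theorem norm_apply_sub_apply_le_iSup_Icc {C₁ C₂ : ℝ → E →L[𝕜] F} {a b B : ℝ}
    (h₁ : ∀ t ∈ Icc a b, ‖C₁ t‖ ≤ B) (h₂ : ∀ t ∈ Icc a b, ‖C₂ t‖ ≤ B) (x y : E) {t : ℝ}
    (ht : t ∈ Icc a b) :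
    ‖C₁ t x - C₂ t y‖ ≤ ⨆ r : Icc a b, ‖C₁ r x - C₂ r y‖ := by
  refine le_ciSup (f := fun r : Icc a b => ‖C₁ r x - C₂ r y‖) ⟨B * ‖x‖ + B * ‖y‖, ?_⟩ ⟨t, ht⟩
  rintro _ ⟨r, rfl⟩
  exact (norm_sub_le _ _).trans
    (add_le_add ((C₁ r).le_of_opNorm_le (h₁ r r.2) x) ((C₂ r).le_of_opNorm_le (h₂ r r.2) y))

theorem norm_apply_sub_apply_le {T₀ S₀ : E →L[𝕜] F} {P : E →L[𝕜] E} {G : E → E} {x y : E}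
    {B K δ : ℝ} (hδ : ‖T₀ (G x) - S₀ (P (G x))‖ ≤ δ) (hS : ‖S₀‖ ≤ B) (hP : ‖P‖ ≤ 1)
    (hG : ∀ x y, ‖G x - G y‖ ≤ K * ‖x - y‖) :
    ‖T₀ (G x) - S₀ (P (G y))‖ ≤ δ + B * K * ‖x - y‖ := by
  have hB : 0 ≤ B := (norm_nonneg _).trans hS
  calc ‖T₀ (G x) - S₀ (P (G y))‖
      ≤ ‖T₀ (G x) - S₀ (P (G x))‖ + ‖S₀ (P (G x - G y))‖ := by
        rw [map_sub, map_sub]; exact norm_sub_le_norm_sub_add_norm_sub _ _ _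
    _ ≤ δ + B * ‖P (G x - G y)‖ := by gcongr; exact S₀.le_of_opNorm_le hS _
    _ ≤ δ + B * ‖G x - G y‖ := by gcongr; simpa using P.le_of_opNorm_le hP (G x - G y)
    _ ≤ δ + B * (K * ‖x - y‖) := by gcongr; exact hG x y
    _ = δ + B * K * ‖x - y‖ := by ring

end OperatorFamilies

theorem le_mul_exp_of_le_add_mul_integral {w : ℝ → ℝ} {a b C L : ℝ} (hL : 0 ≤ L)
    (hw : ContinuousOn w (Icc a b)) (h : ∀ t ∈ Icc a b, w t ≤ C + L * ∫ s in a..t, w s) :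
    ∀ t ∈ Icc a b, w t ≤ C * Real.exp (L * (t - a)) := by
  set W : ℝ → ℝ := fun t => ∫ s in a..t, w s
  have hW_cont : ContinuousOn W (Icc a b) := by
    rcases le_or_gt a b with hab | hab
    · rw [← uIcc_of_le hab] at hw ⊢
      exact continuousOn_primitive_interval (hw.integrableOn_compact isCompact_uIcc)
    · simp [Icc_eq_empty_of_lt hab]
  have hW_deriv : ∀ x ∈ Ico a b, HasDerivWithinAt W (w x) (Ici x) x := by
    intro x hx
    have hmem : Icc a b ∈ 𝓝[>] x := Icc_mem_nhdsGT_of_mem hx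
    exact integral_hasDerivWithinAt_right
      ((hw.mono (Icc_subset_Icc_right hx.2.le)).intervalIntegrable_of_Icc hx.1)
      ⟨Icc a b, hmem, hw.aestronglyMeasurable measurableSet_Icc⟩
      ((hw x (Ico_subset_Icc_self hx)).mono_of_mem_nhdsWithin hmem)
  have hW_le : ∀ t ∈ Icc a b, W t ≤ gronwallBound 0 L C (t - a) :=
    le_gronwallBound_of_liminf_deriv_right_le hW_cont
      (fun x hx _ hr => (hW_deriv x hx).liminf_right_slope_le hr) (by simp [W])
      (fun x hx => by linarith [h x (Ico_subset_Icc_self hx)])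
  intro t ht
  calc w t ≤ C + L * W t := h t ht
    _ ≤ C + L * gronwallBound 0 L C (t - a) := by gcongr; exact hW_le t ht
    _ = C * Real.exp (L * (t - a)) := by
      rcases eq_or_ne L 0 with rfl | hL0
      · simp
      · rw [gronwallBound_of_K_ne_0 hL0]
        field_simp
        ring

theorem norm_sub_le_norm_sub_add_integral_norm_sub {E : Type*} [NormedAddCommGroup E]
    [NormedSpace ℝ E] {x y a b : E} {f g : ℝ → E} {t₀ t : ℝ} (ht : t₀ ≤ t)
    (hx : x = a + ∫ s in t₀..t, f s) (hy : y = b + ∫ s in t₀..t, g s)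
    (hf : IntervalIntegrable f volume t₀ t) (hg : IntervalIntegrable g volume t₀ t) :
    ‖x - y‖ ≤ ‖a - b‖ + ∫ s in t₀..t, ‖f s - g s‖ := by
  calc ‖x - y‖ = ‖(a - b) + ∫ s in t₀..t, (f s - g s)‖ := by
        rw [hx, hy, integral_sub hf hg]; abel_nf
    _ ≤ _ := (norm_add_le _ _).trans
        (by gcongr; exact intervalIntegral.norm_integral_le_integral_norm ht)

theorem norm_mild_sub_le {X : Type*} [NormedAddCommGroup X] [NormedSpace ℝ X]
    {T S : ℝ → X →L[ℝ] X} {P : X →L[ℝ] X} {G : X → X} {u v : ℝ → X} {u₀ : X}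
    {τ B K ε : ℝ} {d : ℝ → ℝ}
    (hTcont : ∀ x, ContinuousOn (fun t => T t x) (Icc 0 τ))
    (hScont : ∀ x, ContinuousOn (fun t => S t x) (Icc 0 τ))
    (hTB : ∀ t ∈ Icc 0 τ, ‖T t‖ ≤ B) (hSB : ∀ t ∈ Icc 0 τ, ‖S t‖ ≤ B)
    (hP : ‖P‖ ≤ 1) (hG : ∀ x y, ‖G x - G y‖ ≤ K * ‖x - y‖)
    (hu_cont : ContinuousOn u (Icc 0 τ)) (hv_cont : ContinuousOn v (Icc 0 τ))
    (hu : ∀ t ∈ Icc 0 τ, u t = T t u₀ + ∫ s in 0..t, T (t - s) (G (u s)))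
    (hv : ∀ t ∈ Icc 0 τ, v t = S t (P u₀) + ∫ s in 0..t, S (t - s) (P (G (v s))))
    (hε : ∀ t ∈ Icc 0 τ, ‖T t u₀ - S t (P u₀)‖ ≤ ε)
    (hd : ∀ s ∈ Icc 0 τ, ∀ t ∈ Icc s τ,
      ‖T (t - s) (G (u s)) - S (t - s) (P (G (u s)))‖ ≤ d s)
    (hd_int : IntervalIntegrable d volume 0 τ) :
    ∀ t ∈ Icc 0 τ, ‖u t - v t‖ ≤ ε + (∫ s in 0..τ, d s) + B * K * ∫ s in 0..t, ‖u s - v s‖ := by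
  intro t ht
  have hsub : Icc 0 t ⊆ Icc 0 τ := Icc_subset_Icc_right ht.2
  have hmaps : MapsTo (fun s => t - s) (Icc 0 t) (Icc 0 τ) := fun s hs =>
    ⟨by linarith [hs.2], by linarith [hs.1, ht.2]⟩
  have hGc : Continuous G :=
    (LipschitzWith.of_dist_le' (by simpa only [dist_eq_norm] using hG)).continuous
  have hf : ContinuousOn (fun s => T (t - s) (G (u s))) (Icc 0 t) :=
    .clm_apply_of_norm_le hTcont hTB (by fun_prop) hmaps
      (hGc.comp_continuousOn (hu_cont.mono hsub))
  have hg : ContinuousOn (fun s => S (t - s) (P (G (v s)))) (Icc 0 t) :=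
    .clm_apply_of_norm_le hScont hSB (by fun_prop) hmaps
      ((P.continuous.comp hGc).comp_continuousOn (hv_cont.mono hsub))
  have hw_int : IntervalIntegrable (fun s => ‖u s - v s‖) volume 0 t :=
    ((hu_cont.sub hv_cont).norm.mono hsub).intervalIntegrable_of_Icc ht.1
  have hd_int' : IntervalIntegrable d volume 0 t :=
    hd_int.mono_set (uIcc_subset_uIcc left_mem_uIcc (by simpa [uIcc_of_le (ht.1.trans ht.2)]))
  have hd_nonneg : ∀ s ∈ Icc 0 τ, 0 ≤ d s := fun s hs =>
    (norm_nonneg _).trans (hd s hs s ⟨le_rfl, hs.2⟩)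
  have hpt : ∀ s ∈ Icc 0 t, ‖T (t - s) (G (u s)) - S (t - s) (P (G (v s)))‖ ≤
      d s + B * K * ‖u s - v s‖ := fun s hs =>
    norm_apply_sub_apply_le (hd s (hsub hs) t ⟨hs.2, ht.2⟩) (hSB _ (hmaps hs)) hP hG
  calc ‖u t - v t‖
      ≤ ‖T t u₀ - S t (P u₀)‖ + ∫ s in 0..t, ‖T (t - s) (G (u s)) - S (t - s) (P (G (v s)))‖ :=
        norm_sub_le_norm_sub_add_integral_norm_sub ht.1 (hu t ht) (hv t ht)
          (hf.intervalIntegrable_of_Icc ht.1) (hg.intervalIntegrable_of_Icc ht.1)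
    _ ≤ ε + ∫ s in 0..t, (d s + B * K * ‖u s - v s‖) :=
        add_le_add (hε t ht) (integral_mono_on ht.1
          ((hf.sub hg).norm.intervalIntegrable_of_Icc ht.1) (hd_int'.add (hw_int.const_mul _)) hpt)
    _ = ε + (∫ s in 0..t, d s) + B * K * ∫ s in 0..t, ‖u s - v s‖ := by
        rw [integral_add hd_int' (hw_int.const_mul _), intervalIntegral.integral_const_mul]; ring
    _ ≤ ε + (∫ s in 0..τ, d s) + B * K * ∫ s in 0..t, ‖u s - v s‖ := by
        gcongr
        exact integral_mono_interval le_rfl ht.1 ht.2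
          (ae_restrict_of_forall_mem measurableSet_Ioc fun s hs =>
            hd_nonneg s (Ioc_subset_Icc_self hs)) hd_int

theorem mild_solution_approximation_gronwall_general {X : Type*} [NormedAddCommGroup X]
    [NormedSpace ℝ X]
    (M ω K Tstar : ℝ) (hM : 1 ≤ M) (hω : 0 ≤ ω) (hK : 0 ≤ K)
    (T S : ℝ → X →L[ℝ] X)
    (hTcont : ∀ x : X, ContinuousOn (fun t => T t x) (Ici 0))
    (hScont : ∀ x : X, ContinuousOn (fun t => S t x) (Ici 0))
    (hTbound : ∀ t : ℝ, 0 ≤ t → ‖T t‖ ≤ M * Real.exp (ω * t))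
    (hSbound : ∀ t : ℝ, 0 ≤ t → ‖S t‖ ≤ M * Real.exp (ω * t))
    (P : X →L[ℝ] X) (hP : ‖P‖ ≤ 1)
    (G : X → X) (hG : ∀ x y : X, ‖G x - G y‖ ≤ K * ‖x - y‖)
    (u₀ : X) (u v : ℝ → X)
    (hu_cont : ContinuousOn u (Icc 0 Tstar)) (hv_cont : ContinuousOn v (Icc 0 Tstar))
    (hu : ∀ t ∈ Icc (0 : ℝ) Tstar, u t = T t u₀ + ∫ s in (0 : ℝ)..t, T (t - s) (G (u s)))
    (hv : ∀ t ∈ Icc (0 : ℝ) Tstar,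
      v t = S t (P u₀) + ∫ s in (0 : ℝ)..t, S (t - s) (P (G (v s))))
    (ε : ℝ) (hε : ε = ⨆ t : Icc (0 : ℝ) Tstar, ‖T (t : ℝ) u₀ - S (t : ℝ) (P u₀)‖)
    (dN : ℝ → ℝ)
    (hdN : ∀ s : ℝ, dN s =
      ⨆ t : Icc s Tstar, ‖T ((t : ℝ) - s) (G (u s)) - S ((t : ℝ) - s) (P (G (u s)))‖)
    (hdN_int : IntervalIntegrable dN volume 0 Tstar)
    (D : ℝ) (hD : D = ∫ s in (0 : ℝ)..Tstar, dN s) :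
    ∀ t ∈ Icc (0 : ℝ) Tstar,
      ‖u t - v t‖ ≤ (ε + D) * Real.exp (M * K * Tstar * Real.exp (ω * Tstar)) := by
  intro t ht
  have hτ : 0 ≤ Tstar := ht.1.trans ht.2
  have hM₀ : 0 ≤ M := zero_le_one.trans hM
  have hB : ∀ C : ℝ → X →L[ℝ] X, (∀ t, 0 ≤ t → ‖C t‖ ≤ M * Real.exp (ω * t)) →
      ∀ t ∈ Icc 0 Tstar, ‖C t‖ ≤ M * Real.exp (ω * Tstar) := fun C hC t ht =>
    (hC t ht.1).trans (by gcongr; exact ht.2)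
  have hε' : ∀ t ∈ Icc 0 Tstar, ‖T t u₀ - S t (P u₀)‖ ≤ ε := fun t ht =>
    hε ▸ norm_apply_sub_apply_le_iSup_Icc (hB T hTbound) (hB S hSbound) _ _ ht
  have hdN' : ∀ s ∈ Icc 0 Tstar, ∀ t ∈ Icc s Tstar,
      ‖T (t - s) (G (u s)) - S (t - s) (P (G (u s)))‖ ≤ dN s := fun s hs t ht => by
    have hshift : ∀ r ∈ Icc s Tstar, r - s ∈ Icc 0 Tstar := fun r hr =>
      ⟨sub_nonneg.2 hr.1, by linarith [hr.2, hs.1]⟩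
    exact hdN s ▸ norm_apply_sub_apply_le_iSup_Icc (C₁ := fun r => T (r - s))
      (C₂ := fun r => S (r - s)) (fun r hr => hB T hTbound _ (hshift r hr))
      (fun r hr => hB S hSbound _ (hshift r hr)) _ _ ht
  have hε0 : 0 ≤ ε := (norm_nonneg _).trans (hε' 0 ⟨le_rfl, hτ⟩)
  have hD0 : 0 ≤ D := hD ▸ integral_nonneg hτ fun s hs =>
    (norm_nonneg _).trans (hdN' s hs s ⟨le_rfl, hs.2⟩)
  have hmild := norm_mild_sub_le (fun x => (hTcont x).mono Icc_subset_Ici_self)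
    (fun x => (hScont x).mono Icc_subset_Ici_self) (hB T hTbound) (hB S hSbound) hP hG
    hu_cont hv_cont hu hv hε' hdN' hdN_int
  rw [← hD] at hmild
  calc ‖u t - v t‖ ≤ (ε + D) * Real.exp (M * Real.exp (ω * Tstar) * K * (t - 0)) :=
        le_mul_exp_of_le_add_mul_integral (by positivity) (hu_cont.sub hv_cont).norm hmild t ht
    _ ≤ (ε + D) * Real.exp (M * Real.exp (ω * Tstar) * K * Tstar) := by gcongr; linarith [ht.2]
    _ = (ε + D) * Real.exp (M * K * Tstar * Real.exp (ω * Tstar)) := by ring_nf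

/-- Gronwall estimate for the difference between the mild solution `u` of the abstract ODE
and the mild solution `v` of its (Galerkin-type) approximation:
`‖u(t) - v(t)‖ ≤ (ε + D) exp(M K T* e^{ω T*})` on `[0, T*]`, where
`ε = sup_{[0,T*]} ‖T(t)u₀ - S(t)Πu₀‖` and
`D = ∫₀^{T*} sup_{t∈[s,T*]} ‖(T(t-s) - S(t-s)Π)(G(u(s)))‖ ds`. -/
theorem mild_solution_approximation_gronwall {X : Type*} [NormedAddCommGroup X]
    [NormedSpace ℝ X] [CompleteSpace X]
    (M ω K Tstar : ℝ) (hM : 1 ≤ M) (hω : 0 ≤ ω) (hK : 0 ≤ K) (hTstar : 0 < Tstar)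
    (T S : ℝ → X →L[ℝ] X)
    (hTcont : ∀ x : X, ContinuousOn (fun t => T t x) (Ici 0))
    (hScont : ∀ x : X, ContinuousOn (fun t => S t x) (Ici 0))
    (hTbound : ∀ t : ℝ, 0 ≤ t → ‖T t‖ ≤ M * Real.exp (ω * t))
    (hSbound : ∀ t : ℝ, 0 ≤ t → ‖S t‖ ≤ M * Real.exp (ω * t))
    (P : X →L[ℝ] X) (hP : ‖P‖ ≤ 1)
    (G : X → X) (hG : ∀ x y : X, ‖G x - G y‖ ≤ K * ‖x - y‖)
    (u₀ : X) (u v : ℝ → X)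
    (hu_cont : ContinuousOn u (Icc 0 Tstar)) (hv_cont : ContinuousOn v (Icc 0 Tstar))
    (hu : ∀ t ∈ Icc (0 : ℝ) Tstar, u t = T t u₀ + ∫ s in (0 : ℝ)..t, T (t - s) (G (u s)))
    (hv : ∀ t ∈ Icc (0 : ℝ) Tstar,
      v t = S t (P u₀) + ∫ s in (0 : ℝ)..t, S (t - s) (P (G (v s))))
    (ε : ℝ) (hε : ε = ⨆ t : Icc (0 : ℝ) Tstar, ‖T (t : ℝ) u₀ - S (t : ℝ) (P u₀)‖)
    (dN : ℝ → ℝ)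
    (hdN : ∀ s : ℝ, dN s =
      ⨆ t : Icc s Tstar, ‖T ((t : ℝ) - s) (G (u s)) - S ((t : ℝ) - s) (P (G (u s)))‖)
    (hdN_int : IntervalIntegrable dN volume 0 Tstar)
    (D : ℝ) (hD : D = ∫ s in (0 : ℝ)..Tstar, dN s) :
    ∀ t ∈ Icc (0 : ℝ) Tstar,
      ‖u t - v t‖ ≤ (ε + D) * Real.exp (M * K * Tstar * Real.exp (ω * Tstar)) :=
  mild_solution_approximation_gronwall_general M ω K Tstar hM hω hK T S hTcont hScont hTbound
    hSbound P hP G hG u₀ u v hu_cont hv_cont hu hv ε hε dN hdN hdN_int D hD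
end
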